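/- Let A be a unital complex C*-algebra and let p, q ∈ A be projections (p* = p = p², q* = q = q²). Then 1 − q·p·q and 1 − p·q·p are positive elements of A, and the 2×2 matrix over A given by U := [[(1 − q·p·q)^{1/2} , q·p],[p·q , −(1 − p·q·p)^{1/2}]] is a selfadjoint unitary: U* = U and U² = 1. -/

import Mathlib

/-!
The element `(p - q) * (p - q)` commutes with both projections, and
`1 - p * q * p = (1 - p) + (p - q) * (p - q) * p` is a sum of two positive elements living under
the orthogonal projections `1 - p` and `p`. Hence its square root is
`(1 - p) + √((p - q) * (p - q)) * p`, and the commutation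
`√(1 - q * p * q) * (q * p) = q * p * √(1 - p * q * p)` becomes an algebraic identity: both sides
equal `√((p - q) * (p - q)) * q * p`. With it, `U * U = 1` is checked entrywise.
-/

namespace IsIdempotentElem

variable {R : Type*} [Ring R] {p q : R}

theorem commute_sub_mul_sub (hp : IsIdempotentElem p) (hq : IsIdempotentElem q) :
    Commute ((p - q) * (p - q)) p := by
  simp only [Commute, SemiconjBy, sub_mul, mul_sub, mul_assoc, hp.eq, hp.mul_self_mul, hq.eq]
  abel

theorem one_sub_mul_mul_eq (hp : IsIdempotentElem p) (hq : IsIdempotentElem q) :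
    1 - p * q * p = 1 - p + (p - q) * (p - q) * p := by
  simp only [sub_mul, mul_sub, mul_assoc, hq.mul_self_mul, hp.eq]
  abel

theorem one_sub_add_mul_mul_self (hq : IsIdempotentElem q) (s : R) :
    (1 - q + s * q) * q = s * q := by
  rw [add_mul, hq.one_sub_mul_self, zero_add, hq.mul_mul_self]

theorem mul_one_sub_add_mul (hq : IsIdempotentElem q) {s : R} (hs : Commute s q) :
    q * (1 - q + s * q) = s * q := by
  rw [mul_add, hq.mul_one_sub_self, zero_add, ← mul_assoc, ← hs.eq, hq.mul_mul_self]

end IsIdempotentElem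

theorem IsStarProjection.one_sub_add_mul_nonneg {R : Type*} [Ring R] [StarRing R] [PartialOrder R]
    [StarOrderedRing R] {q e : R} (hq : IsStarProjection q) (he : 0 ≤ e) (heq : Commute e q) :
    0 ≤ 1 - q + e * q := by
  have hconj : e * q = star q * e * q := by
    rw [hq.isSelfAdjoint.star_eq, ← heq.eq, hq.isIdempotentElem.mul_mul_self]
  rw [hconj]
  exact add_nonneg hq.one_sub_nonneg (star_left_conjugate_nonneg he q)

namespace IsStarProjection

variable {A : Type*} [CStarAlgebra A] [PartialOrder A] [StarOrderedRing A] {p q e : A}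

theorem sqrt_one_sub_add_mul (hq : IsStarProjection q) (he : 0 ≤ e) (heq : Commute e q) :
    CFC.sqrt (1 - q + e * q) = 1 - q + CFC.sqrt e * q := by
  have hsq : Commute (CFC.sqrt e) q := heq.cfcₙ_nnreal _
  refine CFC.sqrt_unique ?_ (hq.one_sub_add_mul_nonneg (CFC.sqrt_nonneg e) hsq)
  calc (1 - q + CFC.sqrt e * q) * (1 - q + CFC.sqrt e * q)
      = (1 - q + CFC.sqrt e * q) * (1 - q) + (1 - q + CFC.sqrt e * q) * q * CFC.sqrt e := by
        rw [mul_add, mul_assoc, hsq.eq]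
    _ = 1 - q + CFC.sqrt e * CFC.sqrt e * q := by
        rw [add_mul, hq.isIdempotentElem.one_sub.eq, mul_assoc, hq.mul_one_sub_self, mul_zero,
          add_zero, hq.isIdempotentElem.one_sub_add_mul_mul_self, mul_assoc, ← hsq.eq, mul_assoc]
    _ = 1 - q + e * q := by rw [CFC.sqrt_mul_sqrt_self e he]

theorem one_sub_mul_mul_nonneg (hp : IsStarProjection p) (hq : IsStarProjection q) :
    0 ≤ 1 - p * q * p := by
  rw [hp.isIdempotentElem.one_sub_mul_mul_eq hq.isIdempotentElem]
  exact hp.one_sub_add_mul_nonneg (hp.isSelfAdjoint.sub hq.isSelfAdjoint).mul_self_nonneg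
    (hp.isIdempotentElem.commute_sub_mul_sub hq.isIdempotentElem)

theorem sqrt_one_sub_mul_mul_eq (hp : IsStarProjection p) (hq : IsStarProjection q) :
    CFC.sqrt (1 - p * q * p) = 1 - p + CFC.sqrt ((p - q) * (p - q)) * p := by
  rw [hp.isIdempotentElem.one_sub_mul_mul_eq hq.isIdempotentElem]
  exact hp.sqrt_one_sub_add_mul (hp.isSelfAdjoint.sub hq.isSelfAdjoint).mul_self_nonneg
    (hp.isIdempotentElem.commute_sub_mul_sub hq.isIdempotentElem)

theorem sqrt_one_sub_mul_mul_mul_comm (hp : IsStarProjection p) (hq : IsStarProjection q) :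
    CFC.sqrt (1 - q * p * q) * (q * p) = q * p * CFC.sqrt (1 - p * q * p) := by
  have hswap : (q - p) * (q - p) = (p - q) * (p - q) := by rw [← neg_sub p q, neg_mul_neg]
  have hsq : Commute (CFC.sqrt ((p - q) * (p - q))) q :=
    .cfcₙ_nnreal (hswap ▸ hq.isIdempotentElem.commute_sub_mul_sub hp.isIdempotentElem) _
  have hsp : Commute (CFC.sqrt ((p - q) * (p - q))) p :=
    .cfcₙ_nnreal (hp.isIdempotentElem.commute_sub_mul_sub hq.isIdempotentElem) _
  rw [hq.sqrt_one_sub_mul_mul_eq hp, hp.sqrt_one_sub_mul_mul_eq hq, hswap, ← mul_assoc,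
    hq.isIdempotentElem.one_sub_add_mul_mul_self, mul_assoc q,
    hp.isIdempotentElem.mul_one_sub_add_mul hsp, hsq.eq, mul_assoc]

end IsStarProjection

theorem selfadjoint_unitary_of_two_projections
    {A : Type*} [CStarAlgebra A] [PartialOrder A] [StarOrderedRing A]
    (p q : A) (hp : IsIdempotentElem p) (hpsa : IsSelfAdjoint p)
    (hq : IsIdempotentElem q) (hqsa : IsSelfAdjoint q)
    (U : Matrix (Fin 2) (Fin 2) A)
    (hU : U = !![CFC.sqrt (1 - q * p * q), q * p;
                 p * q, -CFC.sqrt (1 - p * q * p)]) :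
    0 ≤ 1 - q * p * q ∧ 0 ≤ 1 - p * q * p ∧
    star U = U ∧ U * U = 1 := by
  have hP : IsStarProjection p := ⟨hp, hpsa⟩
  have hQ : IsStarProjection q := ⟨hq, hqsa⟩
  have ha := hQ.one_sub_mul_mul_nonneg hP
  have hb := hP.one_sub_mul_mul_nonneg hQ
  refine ⟨ha, hb, ?_, ?_⟩
  · subst hU
    ext i j
    fin_cases i <;> fin_cases j <;> simp [(CFC.sqrt_nonneg (1 - q * p * q)).star_eq,
      (CFC.sqrt_nonneg (1 - p * q * p)).star_eq, hpsa.star_eq, hqsa.star_eq]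
  · have hpq := hP.sqrt_one_sub_mul_mul_mul_comm hQ
    have hqp := hQ.sqrt_one_sub_mul_mul_mul_comm hP
    have hqpq : q * p * (p * q) = q * p * q := by rw [← mul_assoc, hp.mul_mul_self]
    have hpqp : p * q * (q * p) = p * q * p := by rw [← mul_assoc, hq.mul_mul_self]
    subst hU
    rw [Matrix.mul_fin_two, Matrix.one_fin_two, mul_neg, neg_mul, neg_mul_neg,
      CFC.sqrt_mul_sqrt_self _ ha, CFC.sqrt_mul_sqrt_self _ hb, hpq, ← hqp, hqpq, hpqp,
      sub_add_cancel, add_sub_cancel, add_neg_cancel, add_neg_cancel]
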